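/- Split of a standard DP problem: let α be a type and let P, P', R, R' be binary relations on α with P' ≤ P and R' ≤ R (P' and R' are subrelations of P and R). If the relative DP problem (P', P \ P', R', R \ R') is finite and the relative DP problem (P \ P', ⊥, ⊥, R \ R') is finite, then the relative DP problem (P, ⊥, ⊥, R) is finite (here ⊥ is the empty relation and P \ P' denotes the relation holding exactly where P holds but P' does not). -/

import Mathlib

/-- `T` is strongly normalizing: no infinite `T`-sequence. -/
def SN {α : Type*} (T : α → α → Prop) : Prop :=
  ¬ ∃ f : ℕ → α, ∀ i, T (f i) (f (i + 1))

/-- `T` is strongly normalizing at `a`: no infinite `T`-sequence starting in `a`. -/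
def SNAt {α : Type*} (T : α → α → Prop) (a : α) : Prop :=
  ¬ ∃ f : ℕ → α, f 0 = a ∧ ∀ i, T (f i) (f (i + 1))

/-- Minimal infinite standard DP `(P,R)`-chain given by sequences `a b : ℕ → α`. -/
def MinChain {α : Type*} (P R : α → α → Prop) (a b : ℕ → α) : Prop :=
  (∀ i, P (a i) (b i)) ∧
  (∀ i, Relation.ReflTransGen R (b i) (a (i + 1))) ∧
  (∀ i, SNAt R (b i))

/-- The standard DP problem `(P,R)` is finite: there is no minimal infinite chain. -/
def DPFinite {α : Type*} (P R : α → α → Prop) : Prop :=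
  ¬ ∃ a b : ℕ → α, MinChain P R a b

/-- Minimal infinite relative DP `(P,Pw,R,Rw)`-chain given by sequences `a b : ℕ → α`. -/
def MinRelChain {α : Type*} (P Pw R Rw : α → α → Prop) (a b : ℕ → α) : Prop :=
  (∀ i, (P ⊔ Pw) (a i) (b i)) ∧
  (∀ i, Relation.ReflTransGen (R ⊔ Rw) (b i) (a (i + 1))) ∧
  (∀ N, ∃ i, N ≤ i ∧ (P (a i) (b i) ∨
    ∃ u v, Relation.ReflTransGen (R ⊔ Rw) (b i) u ∧ R u v ∧
      Relation.ReflTransGen (R ⊔ Rw) v (a (i + 1)))) ∧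
  (∀ i, SNAt (R ⊔ Rw) (b i))

/-- The relative DP problem `(P,Pw,R,Rw)` is finite: no minimal infinite chain. -/
def RelDPFinite {α : Type*} (P Pw R Rw : α → α → Prop) : Prop :=
  ¬ ∃ a b : ℕ → α, MinRelChain P Pw R Rw a b

/-!
If infinitely many steps of a minimal `(P, R)`-chain use a pair of `P'` or a rewrite step of `R'`,
the chain is a minimal chain of `(P', P \ P', R', R \ R')`, since `R' ⊔ R \ R' = R`. Otherwise some
tail of it uses only pairs of `P \ P'` and rewrites only with `R \ R'`, so it is a minimal chain of
`(P \ P', R \ R')`.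
-/

open Relation Filter

section
variable {α : Type*}

theorem SNAt.mono {T T' : α → α → Prop} (h : T ≤ T') {a : α} (hT' : SNAt T' a) : SNAt T a :=
  fun ⟨f, hf0, hf⟩ => hT' ⟨f, hf0, fun i => h _ _ (hf i)⟩

theorem Relation.ReflTransGen.sdiff_or_through {R R' : α → α → Prop} {x y : α}
    (h : ReflTransGen R x y) :
    ReflTransGen (R \ R') x y ∨ ∃ u v, ReflTransGen R x u ∧ R' u v ∧ ReflTransGen R v y := by
  induction h using ReflTransGen.head_induction_on with
  | refl => exact Or.inl .refl
  | @head x z hxz hzy ih =>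
    by_cases hR' : R' x z
    · exact Or.inr ⟨x, z, .refl, hR', hzy⟩
    · rcases ih with hzy' | ⟨u, v, hzu, huv, hvy⟩
      · exact Or.inl (.head ⟨hxz, hR'⟩ hzy')
      · exact Or.inr ⟨u, v, .head hxz hzu, huv, hvy⟩

theorem minRelChain_bot_bot_iff {P R : α → α → Prop} {a b : ℕ → α} :
    MinRelChain P ⊥ ⊥ R a b ↔ MinChain P R a b := by
  simp only [MinRelChain, MinChain, sup_bot_eq, bot_sup_eq]
  constructor
  · rintro ⟨hP, hR, -, hSN⟩
    exact ⟨hP, hR, hSN⟩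
  · rintro ⟨hP, hR, hSN⟩
    exact ⟨hP, hR, fun N => ⟨N, le_rfl, Or.inl (hP N)⟩, hSN⟩

theorem relDPFinite_bot_bot_iff {P R : α → α → Prop} :
    RelDPFinite P ⊥ ⊥ R ↔ DPFinite P R := by
  simp only [RelDPFinite, DPFinite, minRelChain_bot_bot_iff]

def ChainStepUses (P' R R' : α → α → Prop) (a b : ℕ → α) (i : ℕ) : Prop :=
  P' (a i) (b i) ∨ ∃ u v, ReflTransGen R (b i) u ∧ R' u v ∧ ReflTransGen R v (a (i + 1))

variable {P P' R R' : α → α → Prop} {a b : ℕ → α}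

theorem MinChain.minRelChain_of_frequently (hR : R' ≤ R) (hc : MinChain P R a b)
    (hfreq : ∃ᶠ i in atTop, ChainStepUses P' R R' a b i) :
    MinRelChain P' (P \ P') R' (R \ R') a b := by
  obtain ⟨hP, hred, hSN⟩ := hc
  rw [MinRelChain, sup_sdiff_cancel_right hR]
  exact ⟨fun i => (le_sup_sdiff : P ≤ P' ⊔ P \ P') _ _ (hP i), hred,
    frequently_atTop.1 hfreq, hSN⟩

theorem MinChain.shift_sdiff (hc : MinChain P R a b) {N : ℕ}
    (hN : ∀ i ≥ N, ¬ ChainStepUses P' R R' a b i) :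
    MinChain (P \ P') (R \ R') (fun i => a (N + i)) (fun i => b (N + i)) := by
  obtain ⟨hP, hred, hSN⟩ := hc
  refine ⟨fun i => ⟨hP _, fun h => hN (N + i) (by omega) (Or.inl h)⟩, fun i => ?_,
    fun i => (hSN _).mono sdiff_le⟩
  rcases (hred (N + i)).sdiff_or_through (R' := R') with hsd | hthrough
  · exact hsd
  · exact absurd (Or.inr hthrough) (hN (N + i) (by omega))

end

theorem split_standard_dp_general {α : Type*} (P P' R R' : α → α → Prop)
    (hR : R' ≤ R)
    (h1 : RelDPFinite P' (fun x y => P x y ∧ ¬ P' x y) R' (fun x y => R x y ∧ ¬ R' x y))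
    (h2 : RelDPFinite (fun x y => P x y ∧ ¬ P' x y) ⊥ ⊥ (fun x y => R x y ∧ ¬ R' x y)) :
    RelDPFinite P ⊥ ⊥ R := by
  -- the relations `fun x y => R x y ∧ ¬ R' x y` in `h1`, `h2` are `R \ R'` definitionally
  rw [relDPFinite_bot_bot_iff]
  rintro ⟨a, b, hc⟩
  by_cases hfreq : ∃ᶠ i in atTop, ChainStepUses P' R R' a b i
  · exact h1 ⟨a, b, hc.minRelChain_of_frequently hR hfreq⟩
  · obtain ⟨N, hN⟩ := eventually_atTop.1 (not_frequently.1 hfreq)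
    exact relDPFinite_bot_bot_iff.1 h2 ⟨_, _, hc.shift_sdiff hN⟩

/-- Split of a standard DP problem `(P,⊥,⊥,R)` along subrelations `P' ≤ P`, `R' ≤ R`. -/
theorem split_standard_dp {α : Type*} (P P' R R' : α → α → Prop)
    (hP : P' ≤ P) (hR : R' ≤ R)
    (h1 : RelDPFinite P' (fun x y => P x y ∧ ¬ P' x y) R' (fun x y => R x y ∧ ¬ R' x y))
    (h2 : RelDPFinite (fun x y => P x y ∧ ¬ P' x y) ⊥ ⊥ (fun x y => R x y ∧ ¬ R' x y)) :
    RelDPFinite P ⊥ ⊥ R :=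
  split_standard_dp_general P P' R R' hR h1 h2
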